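/- Let $0 < c < 1$ and let $(n_k)_k$, $(p_k)_k$ satisfy $p_k = \mu/n_k$ for fixed $\mu$ with $0 < \mu < 1$, and $n_k \log(n_k) \leq c \log(k)$ with $n_k \to \infty$. Then $k\, p_k^{n_k} \to \infty$, hence the sample maximum of $k$ i.i.d. $\mathrm{Bin}(n_k,p_k)$ observations equals $n_k$ with probability tending to one. -/

import Mathlib

/-!
Writing `x_k = (μ / n_k) ^ n_k`, we have `log (k x_k) = log k - n_k log n_k + n_k log μ
≥ (1 - c) log k + n_k log μ`. Since `log n_k → ∞`, the hypothesis forces `n_k = o(log k)`, so the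
term `n_k log μ` is negligible and `k x_k → ∞`. The second claim then follows from
`(1 - x_k) ^ k ≤ exp (-k x_k)`.
-/

open Filter Asymptotics Real

theorem isLittleO_of_isBigO_mul_log {α : Type*} {l : Filter α} {f g : α → ℝ}
    (hf : Tendsto f l atTop) (h : (fun x => f x * log (f x)) =O[l] g) : f =o[l] g := by
  have hlog : Tendsto (fun x => log (f x)) l atTop := tendsto_log_atTop.comp hf
  have hinv : (fun x => (log (f x))⁻¹) =o[l] (fun _ => (1 : ℝ)) :=
    (isLittleO_one_iff ℝ).2 hlog.inv_tendsto_atTop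
  refine (h.mul_isLittleO hinv).congr' ?_ (by simp)
  filter_upwards [hlog.eventually_gt_atTop 0] with x hx
  rw [mul_assoc, mul_inv_cancel₀ hx.ne', mul_one]

theorem tendsto_one_sub_pow_of_tendsto_mul_atTop {x : ℕ → ℝ} (hx : ∀ᶠ k in atTop, x k ≤ 1)
    (h : Tendsto (fun k => k * x k) atTop atTop) :
    Tendsto (fun k => (1 - x k) ^ k) atTop (nhds 0) := by
  refine squeeze_zero' ?_ ?_ (tendsto_exp_atBot.comp (tendsto_neg_atTop_atBot.comp h))
  · filter_upwards [hx] with k hk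
    exact pow_nonneg (sub_nonneg.2 hk) k
  · filter_upwards [hx, eventually_ne_atTop 0] with k hk hk0
    have hk0' : (k : ℝ) ≠ 0 := Nat.cast_ne_zero.2 hk0
    calc (1 - x k) ^ k = (1 - k * x k / k) ^ k := by rw [mul_div_cancel_left₀ _ hk0']
      _ ≤ exp (-(k * x k)) :=
        one_sub_div_pow_le_exp_neg (mul_le_of_le_one_right k.cast_nonneg hk)

theorem tendsto_natCast_mul_div_pow_self_atTop {c μ : ℝ} (hc : c < 1) (hμ : 0 < μ) {n : ℕ → ℕ}
    (hn : Tendsto n atTop atTop)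
    (h : ∀ᶠ k in atTop, (n k : ℝ) * log (n k) ≤ c * log k) :
    Tendsto (fun k : ℕ => (k : ℝ) * (μ / n k) ^ (n k)) atTop atTop := by
  have hlog_k : Tendsto (fun k : ℕ => log k) atTop atTop :=
    tendsto_log_atTop.comp tendsto_natCast_atTop_atTop
  have hn_small : (fun k => (n k : ℝ)) =o[atTop] (fun k : ℕ => log k) := by
    refine isLittleO_of_isBigO_mul_log (tendsto_natCast_atTop_atTop.comp hn)
      (IsBigO.of_bound |c| ?_)
    filter_upwards [h] with k hk
    rw [norm_mul, norm_of_nonneg (n k).cast_nonneg, norm_of_nonneg (log_natCast_nonneg _),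
      norm_of_nonneg (log_natCast_nonneg _)]
    exact hk.trans (mul_le_mul_of_nonneg_right (le_abs_self c) (log_natCast_nonneg k))
  have hlower : Tendsto (fun k : ℕ => (1 - c) * log k + n k * log μ) atTop atTop := by
    have hmain := hlog_k.const_mul_atTop (sub_pos.2 hc)
    refine (IsEquivalent.refl.add_isLittleO ?_).symm.tendsto_atTop hmain
    exact (hn_small.mul_isBigO (isBigO_const_const _ (sub_pos.2 hc).ne' _)).congr_right
      (fun k => mul_comm _ _)
  have hpos : ∀ᶠ k : ℕ in atTop, 0 < (k : ℝ) * (μ / n k) ^ (n k) := by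
    filter_upwards [eventually_gt_atTop 0, hn.eventually_gt_atTop 0] with k hk hnk
    positivity
  have hlog_ge : ∀ᶠ k : ℕ in atTop,
      (1 - c) * log k + n k * log μ ≤ log ((k : ℝ) * (μ / n k) ^ (n k)) := by
    filter_upwards [h, eventually_gt_atTop 0, hn.eventually_gt_atTop 0] with k hk hk0 hnk
    rw [log_mul (Nat.cast_ne_zero.2 hk0.ne') (pow_ne_zero _ (by positivity)), log_pow,
      log_div hμ.ne' (Nat.cast_ne_zero.2 hnk.ne')]
    linarith
  refine (tendsto_exp_atTop.comp (tendsto_atTop_mono' _ hlog_ge hlower)).congr' ?_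
  filter_upwards [hpos] with k hk
  exact exp_log hk

theorem sample_maximum_consistent_log_regime_general
    (c μ : ℝ) (hc1 : c < 1) (hμ0 : 0 < μ)
    (n : ℕ → ℕ) (hn : Tendsto n atTop atTop)
    (h : ∀ k : ℕ, 2 ≤ k → (n k : ℝ) * Real.log (n k) ≤ c * Real.log k) :
    Tendsto (fun k : ℕ => (k : ℝ) * (μ / n k) ^ (n k)) atTop atTop ∧
      Tendsto (fun k : ℕ => 1 - (1 - (μ / n k) ^ (n k)) ^ k) atTop (nhds 1) := by
  have hgrowth := tendsto_natCast_mul_div_pow_self_atTop hc1 hμ0 hn (eventually_atTop.2 ⟨2, h⟩)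
  have hle_one : ∀ᶠ k in atTop, (μ / n k) ^ (n k) ≤ 1 := by
    filter_upwards [(tendsto_natCast_atTop_atTop.comp hn).eventually_ge_atTop μ] with k hk
    exact pow_le_one₀ (by positivity) (div_le_one_of_le₀ hk (n k).cast_nonneg)
  refine ⟨hgrowth, ?_⟩
  simpa using tendsto_const_nhds.sub (tendsto_one_sub_pow_of_tendsto_mul_atTop hle_one hgrowth)

/-- If `p_k = μ/n_k` with `0 < μ < 1` fixed, `n_k → ∞`, and
`n_k log n_k ≤ c log k` with `0 < c < 1`, then `k p_k^{n_k} → ∞`, hence the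
sample maximum equals `n_k` with probability `1-(1-p_k^{n_k})^k` tending to
one. -/
theorem sample_maximum_consistent_log_regime
    (c μ : ℝ) (hc0 : 0 < c) (hc1 : c < 1) (hμ0 : 0 < μ) (hμ1 : μ < 1)
    (n : ℕ → ℕ) (hn : Tendsto n atTop atTop)
    (h : ∀ k : ℕ, 2 ≤ k → (n k : ℝ) * Real.log (n k) ≤ c * Real.log k) :
    Tendsto (fun k : ℕ => (k : ℝ) * (μ / n k) ^ (n k)) atTop atTop ∧
      Tendsto (fun k : ℕ => 1 - (1 - (μ / n k) ^ (n k)) ^ k) atTop (nhds 1) :=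
  sample_maximum_consistent_log_regime_general c μ hc1 hμ0 n hn h
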